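/- For all real numbers α, β and all natural numbers n ≥ 1 and m ≥ 1, (α·𝔏_α^[n] + β·𝔏_β^[n])^m = (−1)^(m−1)·(α+β)^(m−1)·(α·𝔏_α^[n] + β·𝔏_β^[n]). -/

import Mathlib

open Matrix


/-- The Markov generator `L_α = [[-1, 0], [1, 0]]`. -/
noncomputable def Lalpha : Matrix (Fin 2) (Fin 2) ℝ := !![-1, 0; 1, 0]

/-- The Markov generator `L_β = [[0, 1], [0, -1]]`. -/
noncomputable def Lbeta : Matrix (Fin 2) (Fin 2) ℝ := !![0, 1; 0, -1]

/-- `X^(A)`: the operator on the `n`-fold tensor power `(ℝ²)^⊗n` (indexed by functions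
`Fin n → Fin 2`) acting as `X` on the tensor factors in `A` and as the identity elsewhere:
`(X^(A))_{f,g} = (∏_{i ∈ A} X_{f(i),g(i)}) · (∏_{j ∉ A} [f(j) = g(j)])`. -/
noncomputable def opOn {n : ℕ} (X : Matrix (Fin 2) (Fin 2) ℝ) (A : Finset (Fin n)) :
    Matrix (Fin n → Fin 2) (Fin n → Fin 2) ℝ :=
  fun f g => (∏ i ∈ A, X (f i) (g i)) * ∏ j ∈ Aᶜ, (if f j = g j then (1 : ℝ) else 0)

/-- `𝔏_X^[n] := ∑_{∅ ≠ A ⊆ Fin n} X^(A)`. -/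
noncomputable def frakL (n : ℕ) (X : Matrix (Fin 2) (Fin 2) ℝ) :
    Matrix (Fin n → Fin 2) (Fin n → Fin 2) ℝ :=
  ∑ A ∈ Finset.univ.filter (fun A : Finset (Fin n) => A.Nonempty), opOn X A

/-!
Writing `X^{⊗n}` for the Kronecker power, expanding `∏ᵢ (X + 1)` over subsets gives
`𝔏_X^[n] = (X + 1)^{⊗n} - 1`. For `X, Y ∈ {L_α, L_β}` the matrix `X + 1` has the form `e 𝟙ᵀ`
with `e` a standard basis vector, so `(X + 1)(Y + 1) = X + 1`; by multiplicativity of Kronecker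
powers this yields `𝔏_X 𝔏_Y = -𝔏_Y`. Hence `M = α𝔏_α + β𝔏_β` satisfies `M² = -(α + β) M`, and
the powers follow.
-/

section KronPow

variable {κ R : Type*} [CommSemiring R] (ι : Type*) [Fintype ι]

def kronPow (K : Matrix κ κ R) : Matrix (ι → κ) (ι → κ) R :=
  fun f g => ∏ i, K (f i) (g i)

theorem kronPow_mul [Fintype κ] [DecidableEq ι] (K K' : Matrix κ κ R) :
    kronPow ι (K * K') = kronPow ι K * kronPow ι K' := by
  ext f g
  simp only [kronPow, mul_apply, Finset.prod_univ_sum, ← Finset.prod_mul_distrib,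
    Fintype.piFinset_univ]

end KronPow

theorem kronPow_add_one_eq_sum_opOn (n : ℕ) (X : Matrix (Fin 2) (Fin 2) ℝ) :
    kronPow (Fin n) (X + 1) = ∑ A ∈ Finset.univ.powerset, opOn X A := by
  ext f g
  simp only [Matrix.sum_apply, kronPow, Matrix.add_apply, Finset.prod_add, opOn, one_apply,
    Finset.compl_eq_univ_sdiff]

theorem opOn_empty (n : ℕ) (X : Matrix (Fin 2) (Fin 2) ℝ) :
    opOn X (∅ : Finset (Fin n)) = 1 := by
  ext f g
  simp only [opOn, Finset.prod_empty, one_mul, Finset.compl_empty, one_apply]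
  split_ifs with h
  · simp [h]
  · obtain ⟨i, hi⟩ := Function.ne_iff.mp h
    exact Finset.prod_eq_zero (Finset.mem_univ i) (if_neg hi)

theorem frakL_eq_kronPow_sub_one (n : ℕ) (X : Matrix (Fin 2) (Fin 2) ℝ) :
    frakL n X = kronPow (Fin n) (X + 1) - 1 := by
  have hpowerset : (Finset.univ : Finset (Fin n)).powerset =
      insert ∅ (Finset.univ.filter (fun A : Finset (Fin n) => A.Nonempty)) := by
    ext A
    simp [Finset.nonempty_iff_ne_empty, em]
  rw [frakL, eq_sub_iff_add_eq, kronPow_add_one_eq_sum_opOn, hpowerset,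
    Finset.sum_insert (by simp), opOn_empty, add_comm]

theorem frakL_mul_frakL_of_add_one_mul_add_one (n : ℕ) {X Y : Matrix (Fin 2) (Fin 2) ℝ}
    (h : (X + 1) * (Y + 1) = X + 1) :
    frakL n X * frakL n Y = -frakL n Y := by
  rw [frakL_eq_kronPow_sub_one, frakL_eq_kronPow_sub_one, sub_mul, mul_sub, mul_sub,
    ← kronPow_mul, h, one_mul, mul_one, mul_one]
  abel

theorem add_one_mul_add_one_of_mem {X Y : Matrix (Fin 2) (Fin 2) ℝ}
    (hX : X ∈ ({Lalpha, Lbeta} : Set _)) (hY : Y ∈ ({Lalpha, Lbeta} : Set _)) :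
    (X + 1) * (Y + 1) = X + 1 := by
  rcases hX with rfl | rfl <;> rcases hY with rfl | rfl <;>
    · ext i j
      fin_cases i <;> fin_cases j <;>
        simp [Lalpha, Lbeta, mul_apply, Fin.sum_univ_two, one_apply]

theorem mul_self_smul_add_smul {R A : Type*} [CommRing R] [Ring A] [Algebra R A] {x y : A}
    (hxx : x * x = -x) (hxy : x * y = -y) (hyx : y * x = -x) (hyy : y * y = -y) (a b : R) :
    (a • x + b • y) * (a • x + b • y) = (-(a + b)) • (a • x + b • y) := by
  simp only [add_mul, mul_add, smul_mul_smul_comm, hxx, hxy, hyx, hyy]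
  module

theorem pow_succ_of_mul_self_eq_smul {R A : Type*} [CommSemiring R] [Semiring A] [Algebra R A]
    {x : A} {c : R} (h : x * x = c • x) (k : ℕ) : x ^ (k + 1) = c ^ k • x := by
  induction k with
  | zero => simp
  | succ k ih => rw [pow_succ, ih, smul_mul_assoc, h, smul_smul, pow_succ]

theorem frakL_rate_power_general (α β : ℝ) (n m : ℕ) (hm : 1 ≤ m) :
    (α • frakL n Lalpha + β • frakL n Lbeta) ^ m =
      ((-1 : ℝ) ^ (m - 1) * (α + β) ^ (m - 1)) •
        (α • frakL n Lalpha + β • frakL n Lbeta) := by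
  have hmul {X Y : Matrix (Fin 2) (Fin 2) ℝ} (hX : X ∈ ({Lalpha, Lbeta} : Set _))
      (hY : Y ∈ ({Lalpha, Lbeta} : Set _)) : frakL n X * frakL n Y = -frakL n Y :=
    frakL_mul_frakL_of_add_one_mul_add_one n (add_one_mul_add_one_of_mem hX hY)
  have hsq := mul_self_smul_add_smul (hmul (.inl rfl) (.inl rfl)) (hmul (.inl rfl) (.inr rfl))
    (hmul (.inr rfl) (.inl rfl)) (hmul (.inr rfl) (.inr rfl)) α β
  obtain ⟨k, rfl⟩ := Nat.exists_eq_add_of_le' hm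
  rw [Nat.add_sub_cancel, ← mul_pow, neg_one_mul]
  exact pow_succ_of_mul_self_eq_smul hsq k

/-- For all real `α, β` and all `n ≥ 1`, `m ≥ 1`:
`(α·𝔏_α^[n] + β·𝔏_β^[n])^m = (−1)^(m−1)·(α+β)^(m−1)·(α·𝔏_α^[n] + β·𝔏_β^[n])`. -/
theorem frakL_rate_power (α β : ℝ) (n m : ℕ) (hn : 1 ≤ n) (hm : 1 ≤ m) :
    (α • frakL n Lalpha + β • frakL n Lbeta) ^ m =
      ((-1 : ℝ) ^ (m - 1) * (α + β) ^ (m - 1)) •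
        (α • frakL n Lalpha + β • frakL n Lbeta) :=
  frakL_rate_power_general α β n m hm
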